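/- In the coupling between the DaC model on Γ_D and inhomogeneous Bernoulli site percolation X on the rooted tree T_3 (where X(ρ) is the color of the root's copy and X(v) = 1 iff the pivotality event E_ṽ occurs in the copy D_ṽ), for every vertex v ≠ ρ of T_3, the copies of ρ and v in Γ_D are connected by a black path if and only if ρ and v are connected by a path of vertices with X-value 1 in T_3. -/

import Mathlib

open MeasureTheory Filter Set

attribute [local instance] Classical.propDecidable

structure Multigraph where
  V : Type
  E : Type
  ends : E → V × V

namespace Multigraph
variable (G : Multigraph)

/-- The edge `e` is incident to the vertex `v`. -/
def Inc (e : G.E) (v : G.V) : Prop := (G.ends e).1 = v ∨ (G.ends e).2 = v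

/-- The degree of a vertex: number of incident edges, counted with multiplicity. -/
noncomputable def degree (v : G.V) : ℕ := Nat.card {e : G.E // G.Inc e v}

/-- Adjacency of vertices. -/
def Adj (x y : G.V) : Prop := ∃ e, G.ends e = (x, y) ∨ G.ends e = (y, x)

/-- Connectivity through open edges of the bond configuration `η`. -/
def OpenConn (η : G.E → Bool) : G.V → G.V → Prop :=
  Relation.ReflTransGen (fun x y => ∃ e, η e = true ∧ (G.ends e = (x, y) ∨ G.ends e = (y, x)))

/-- The (vertex set of the) bond cluster of `v`. -/
def cluster (η : G.E → Bool) (v : G.V) : Set G.V := {w | G.OpenConn η v w}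

/-- `x` and `y` lie in the same black cluster of the site configuration `ξ`. -/
def BlackConn (ξ : G.V → Bool) (x y : G.V) : Prop :=
  ξ x = true ∧ Relation.ReflTransGen (fun u w => G.Adj u w ∧ ξ w = true) x y

/-- The event that some black cluster is infinite. -/
def InfiniteBlack : Set (G.V → Bool) := {ξ | ∃ v, {w | G.BlackConn ξ v w}.Infinite}

/-- The minimal vertex (w.r.t. the enumeration `idx`) of the bond cluster of `v`. -/
noncomputable def rep (idx : G.V → ℕ) (η : G.E → Bool) (v : G.V) : G.V :=
  haveI : Nonempty G.V := ⟨v⟩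
  Function.invFun idx (sInf (idx '' G.cluster η v))

/-- The site configuration obtained by giving each bond cluster the color of
its minimal vertex. -/
noncomputable def color (idx : G.V → ℕ) (η : G.E → Bool) (κ : G.V → Bool) : G.V → Bool :=
  fun v => κ (G.rep idx η v)

end Multigraph

/-- `ν` is the Bernoulli(`p`) product measure on `S → Bool`. -/
def IsBernoulli {S : Type} (p : ℝ) (ν : Measure (S → Bool)) : Prop :=
  IsProbabilityMeasure ν ∧ ∀ (s : Finset S) (f : S → Bool),
    ν {ω | ∀ i ∈ s, ω i = f i} = ∏ i ∈ s, ENNReal.ofReal (if f i then p else 1 - p)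

/-- `μ p r` is the divide-and-color measure built from the Bernoulli bond measures
`νE p` and the Bernoulli coloring measures `νV r`, clusters being colored by the
color of their `idx`-minimal vertex. -/
def IsDaC (G : Multigraph) (idx : G.V → ℕ)
    (νE : ℝ → Measure (G.E → Bool)) (νV : ℝ → Measure (G.V → Bool))
    (μ : ℝ → ℝ → Measure (G.V → Bool)) : Prop :=
  (∀ p ∈ Set.Icc (0:ℝ) 1, IsBernoulli p (νE p)) ∧
  (∀ r ∈ Set.Icc (0:ℝ) 1, IsBernoulli r (νV r)) ∧
  (∀ p r, μ p r = ((νE p).prod (νV r)).map (fun ω => G.color idx ω.1 ω.2))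

/-- `rc` is the critical coloring value function of the family of measures `μ`. -/
def IsCriticalColoring (G : Multigraph) (μ : ℝ → ℝ → Measure (G.V → Bool)) (rc : ℝ → ℝ) : Prop :=
  ∀ p ∈ Set.Icc (0:ℝ) 1, rc p ∈ Set.Icc (0:ℝ) 1 ∧
    (∀ r ∈ Set.Icc (0:ℝ) 1, r < rc p → μ p r G.InfiniteBlack = 0) ∧
    (∀ r ∈ Set.Icc (0:ℝ) 1, rc p < r → 0 < μ p r G.InfiniteBlack)

/-- `pc` is the critical point of Bernoulli bond percolation `νE`. -/
def IsBondCritical (G : Multigraph) (νE : ℝ → Measure (G.E → Bool)) (pc : ℝ) : Prop :=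
  pc ∈ Set.Icc (0:ℝ) 1 ∧
  ∀ p ∈ Set.Icc (0:ℝ) 1,
    (p < pc → νE p {η | ∃ v, (G.cluster η v).Infinite} = 0) ∧
    (pc < p → 0 < νE p {η | ∃ v, (G.cluster η v).Infinite})

/-- Probability of the event `A` under Bernoulli(`p`) bond percolation on a finite
edge set. -/
noncomputable def bprob {E : Type} [Fintype E] [DecidableEq E] (p : ℝ) (A : Set (E → Bool)) : ℝ :=
  ∑ η : E → Bool, if η ∈ A then ∏ e : E, (if η e then p else 1 - p) else 0

namespace Multigraph

/-- The minimal vertex of the bond cluster of `v` (finite graphs). -/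
noncomputable def minRep (D : Multigraph) [Fintype D.V] [LinearOrder D.V]
    (η : D.E → Bool) (v : D.V) : D.V :=
  ((Set.toFinite (D.cluster η v)).toFinset).min'
    (by rw [Set.Finite.toFinset_nonempty]; exact ⟨v, Relation.ReflTransGen.refl⟩)

/-- Probability of an event `A` (depending on the bond configuration and the induced
coloring) in the divide-and-color model on a finite graph `D`. -/
noncomputable def dacProb (D : Multigraph) [Fintype D.E] [DecidableEq D.E]
    [Fintype D.V] [LinearOrder D.V] (p r : ℝ)
    (A : Set ((D.E → Bool) × (D.V → Bool))) : ℝ :=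
  ∑ η : D.E → Bool, ∑ κ : D.V → Bool,
    ((∏ e : D.E, if η e then p else 1 - p) * (∏ v : D.V, if κ v then r else 1 - r)) *
      (if (η, fun v => κ (D.minRep η v)) ∈ A then 1 else 0)

/-- The event `E_{a,b}`: the bond cluster of `a` is pivotal for the existence of a
black path from `a` to `b`; that is, either `a` and `b` are in the same bond cluster,
or they are in different bond clusters but some vertex at distance 1 from the cluster
of `a` is connected to `b` by a black path. -/
def PivEvent (D : Multigraph) (a b : D.V) : Set ((D.E → Bool) × (D.V → Bool)) :=
  {ω | D.OpenConn ω.1 a b ∨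
    (¬ D.OpenConn ω.1 a b ∧ ∃ v, v ∉ D.cluster ω.1 a ∧
      (∃ u ∈ D.cluster ω.1 a, D.Adj u v) ∧ D.BlackConn ω.2 v b)}

/-- `h^D(p)`: probability that `a` and `b` are in the same bond cluster. -/
noncomputable def hprob (D : Multigraph) [Fintype D.E] [DecidableEq D.E]
    (a b : D.V) (p : ℝ) : ℝ :=
  bprob p {η | D.OpenConn η a b}

/-- `f^D(p,r)`: DaC probability of the pivotality event `E_{a,b}`. -/
noncomputable def fprob (D : Multigraph) [Fintype D.E] [DecidableEq D.E]
    [Fintype D.V] [LinearOrder D.V] (a b : D.V) (p r : ℝ) : ℝ :=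
  D.dacProb p r (D.PivEvent a b)

end Multigraph

/-! ### The rooted 3-regular tree and the tree-like substitution construction -/

/-- Vertices of the rooted 3-regular tree `T₃`: the root is `none`; any other
vertex is reached by first choosing one of the 3 subtrees of the root and then
following a binary path. -/
abbrev V3 : Type := Option (Fin 3 × List (Fin 2))

/-- Edges of `T₃`, indexed by their endpoint `s e` farther from the root. -/
abbrev E3 : Type := Fin 3 × List (Fin 2)

/-- The level of the edge `e`, i.e. the distance from `s e` to the root. -/
def levelE (e : E3) : ℕ := e.2.length + 1

/-- The endpoint of the edge `e` closer to the root (`f(e)`). -/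
def parentV (e : E3) : V3 := if e.2 = [] then none else some (e.1, e.2.dropLast)

/-- Adjacency in the tree `T₃`. -/
def T3Adj (x y : V3) : Prop :=
  ∃ e : E3, (x = parentV e ∧ y = some e) ∨ (y = parentV e ∧ x = some e)

/-- The vertices of `D` other than the two marked ones. -/
def interiorV (D : Multigraph) (a b : D.V) : Type := {v : D.V // v ≠ a ∧ v ≠ b}

/-- Embedding of the vertex set of the copy of `D (levelE e)` replacing the tree
edge `e` into the vertex set of the tree-like graph `Γ_D`: the marked vertex `a`
goes to the endpoint of `e` closer to the root, `b` to the farther endpoint, and the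
other vertices to fresh interior vertices. -/
noncomputable def embedV (D : ℕ → Multigraph) (a b : ∀ n, (D n).V) (e : E3)
    (v : (D (levelE e)).V) :
    V3 ⊕ Σ e' : E3, interiorV (D (levelE e')) (a (levelE e')) (b (levelE e')) :=
  if h : v = a (levelE e) then Sum.inl (parentV e)
  else if h' : v = b (levelE e) then Sum.inl (some e)
  else Sum.inr ⟨e, ⟨v, h, h'⟩⟩

/-- The tree-like graph `Γ_D` obtained from the rooted 3-regular tree by replacing
every edge at level `n` by a copy of `D n`, the endpoint nearer the root being
identified with `a n` and the other one with `b n`. -/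
@[reducible] noncomputable def GammaD (D : ℕ → Multigraph) (a b : ∀ n, (D n).V) : Multigraph where
  V := V3 ⊕ Σ e : E3, interiorV (D (levelE e)) (a (levelE e)) (b (levelE e))
  E := Σ e : E3, (D (levelE e)).E
  ends := fun ed =>
    (embedV D a b ed.1 ((D (levelE ed.1)).ends ed.2).1,
     embedV D a b ed.1 ((D (levelE ed.1)).ends ed.2).2)

/-- The copy of the root `ρ` in `Γ_D`. -/
noncomputable def rootV (D : ℕ → Multigraph) (a b : ∀ n, (D n).V) : (GammaD D a b).V :=
  Sum.inl none


/-- The site variable `X` on the tree `T₃` induced by a DaC configuration `(η, ξ)` on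
`Γ_D`: at the root it records the color of the root copy, and at a vertex `v ≠ ρ` it
records the occurrence of the pivotality event in the copy `D_ṽ`. -/
noncomputable def treeSiteBlack (D : ℕ → Multigraph) (a b : ∀ n, (D n).V)
    (η : (GammaD D a b).E → Bool) (ξ : (GammaD D a b).V → Bool) : V3 → Prop
  | none => ξ (Sum.inl none) = true
  | some e =>
      ((fun ed => η ⟨e, ed⟩, fun w => ξ (embedV D a b e w)) :
          ((D (levelE e)).E → Bool) × ((D (levelE e)).V → Bool)) ∈
        Multigraph.PivEvent (D (levelE e)) (a (levelE e)) (b (levelE e))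
/-!
The copy `D_e` of a tree edge `e` meets the rest of `Γ_D` only in its two marked vertices, so
`Γ_D` retracts onto `D_e`: vertices of `D_e` stay put, vertices hanging below `e` go to `b`, and
all other vertices go to `a`. Each edge of `Γ_D` is mapped to an edge of `D_e` or collapsed to a
point. Hence a black path from `ρ` to the far endpoint `s(e)` passes through the near endpoint
`f(e)` and projects to a black `a`–`b` path in `D_e`. Once `f(e)` is black, its bond cluster in
`D_e` is black (bond clusters are monochromatic), and then a black `a`–`b` path in `D_e` exists
exactly when the pivotality event `E_e` occurs. So `ρ` reaches `s(e)` in `Γ_D` iff `ρ` reaches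
`f(e)` and `X(s(e)) = 1`, which is also the recursion for black connections from the root of `T₃`.
-/

open Relation

namespace Relation.ReflTransGen

variable {α : Type*} {r : α → α → Prop} {s : Set α} {x y : α}

theorem exists_crossing (h : ReflTransGen r x y) (hx : x ∉ s) (hy : y ∈ s) :
    ∃ u w, u ∉ s ∧ w ∈ s ∧ ReflTransGen r x u ∧ r u w ∧ ReflTransGen r w y := by
  induction h using Relation.ReflTransGen.head_induction_on with
  | refl => exact absurd hy hx
  | @head x z hxz hzy ih =>
    by_cases hz : z ∈ s
    · exact ⟨x, z, hx, hz, .refl, hxz, hzy⟩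
    · obtain ⟨u, w, hu, hw, hzu, huw, hwy⟩ := ih hz
      exact ⟨u, w, hu, hw, hzu.head hxz, huw, hwy⟩

theorem split_at_cut {c : α} (hcut : ∀ u w, r u w → u ∉ s → w ∈ s → u = c)
    (h : ReflTransGen r x y) (hx : x ∉ s) (hy : y ∈ s) :
    ReflTransGen r x c ∧ ReflTransGen r c y := by
  obtain ⟨u, w, hu, hw, hxu, huw, hwy⟩ := h.exists_crossing hx hy
  obtain rfl := hcut u w huw hu hw
  exact ⟨hxu, hwy.head huw⟩

end Relation.ReflTransGen

namespace Multigraph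

variable {G : Multigraph} {η : G.E → Bool} {κ : G.V → Bool} {x y z : G.V}

theorem BlackConn.trans (hxy : G.BlackConn κ x y) (hyz : G.BlackConn κ y z) :
    G.BlackConn κ x z :=
  ⟨hxy.1, hxy.2.trans hyz.2⟩

theorem BlackConn.black_right (h : G.BlackConn κ x y) : κ y = true := by
  obtain rfl | ⟨_, -, -, hy⟩ := h.2.cases_tail
  exacts [h.1, hy]

theorem blackConn_of_openConn (hblack : ∀ z ∈ G.cluster η x, κ z = true)
    (h : G.OpenConn η x y) : G.BlackConn κ x y := by
  refine ⟨hblack x .refl, ?_⟩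
  induction h with
  | refl => exact .refl
  | @tail z w hxz hzw ih =>
    obtain ⟨e, he, hends⟩ := hzw
    exact ih.tail ⟨⟨e, hends⟩, hblack w (hxz.tail ⟨e, he, hends⟩)⟩

theorem mem_pivEvent_iff_blackConn {a b : G.V} (hblack : ∀ z ∈ G.cluster η a, κ z = true) :
    (η, κ) ∈ G.PivEvent a b ↔ G.BlackConn κ a b := by
  constructor
  · rintro (hab | ⟨-, v, -, ⟨u, hu, huv⟩, hvb⟩)
    · exact blackConn_of_openConn hblack hab
    · exact ((blackConn_of_openConn hblack hu).trans
        ⟨hblack u hu, .single ⟨huv, hvb.1⟩⟩).trans hvb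
  · intro h
    by_cases hab : G.OpenConn η a b
    · exact Or.inl hab
    · obtain ⟨u, v, hu, hv, -, huv, hvb⟩ :=
        h.2.exists_crossing (s := (G.cluster η a)ᶜ) (fun ha => ha .refl) hab
      exact Or.inr ⟨hab, v, hv, ⟨u, not_not.mp hu, huv.1⟩, huv.2, hvb⟩

end Multigraph

def subtree (e : E3) : Set V3 := {v | ∃ e', v = some e' ∧ e'.1 = e.1 ∧ e.2 <+: e'.2}

theorem some_mem_subtree_self (e : E3) : some e ∈ subtree e :=
  ⟨e, rfl, rfl, List.prefix_refl _⟩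

theorem none_notMem_subtree (e : E3) : none ∉ subtree e := by
  rintro ⟨_, h, -⟩
  cases h

theorem parentV_nil (i : Fin 3) : parentV (i, []) = none := by simp [parentV]

theorem parentV_concat (i : Fin 3) (l : List (Fin 2)) (x : Fin 2) :
    parentV (i, l ++ [x]) = some (i, l) := by simp [parentV]

theorem some_mem_subtree_iff {e e' : E3} :
    some e' ∈ subtree e ↔ e'.1 = e.1 ∧ e.2 <+: e'.2 := by
  simp only [subtree, Set.mem_ofPred_eq, Option.some.injEq, exists_eq_left']

theorem parentV_mem_subtree_iff (e e' : E3) :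
    parentV e' ∈ subtree e ↔ some e' ∈ subtree e ∧ e' ≠ e := by
  obtain ⟨j, m⟩ := e
  obtain ⟨i, l⟩ := e'
  rcases l.eq_nil_or_concat with rfl | ⟨l, x, rfl⟩
  · simp only [parentV_nil, none_notMem_subtree, some_mem_subtree_iff, List.prefix_nil, false_iff]
    rintro ⟨⟨rfl, rfl⟩, hne⟩
    exact hne rfl
  · simp only [parentV_concat, some_mem_subtree_iff, List.concat_eq_append, List.prefix_concat_iff,
      ne_eq, Prod.mk.injEq]
    constructor
    · rintro ⟨rfl, hm⟩
      refine ⟨⟨rfl, .inr hm⟩, fun ⟨_, hlm⟩ => ?_⟩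
      simpa [← hlm] using hm.length_le
    · rintro ⟨⟨rfl, hm | hm⟩, hne⟩
      exacts [absurd ⟨rfl, hm.symm⟩ hne, ⟨rfl, hm⟩]

theorem t3Adj_parentV (e : E3) : T3Adj (parentV e) (some e) := ⟨e, .inl ⟨rfl, rfl⟩⟩

section Gamma

variable {D : ℕ → Multigraph} {a b : ∀ n, (D n).V}

theorem embedV_a (e : E3) : embedV D a b e (a (levelE e)) = .inl (parentV e) := by
  simp [embedV]

theorem embedV_b (hab : ∀ n, a n ≠ b n) (e : E3) :
    embedV D a b e (b (levelE e)) = .inl (some e) := by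
  simp [embedV, (hab (levelE e)).symm]

theorem embedV_of_ne {e : E3} {x : (D (levelE e)).V} (ha : x ≠ a (levelE e))
    (hb : x ≠ b (levelE e)) : embedV D a b e x = .inr ⟨e, x, ha, hb⟩ := by
  simp [embedV, ha, hb]

theorem exists_copy_of_adj {u w : (GammaD D a b).V} (h : (GammaD D a b).Adj u w) :
    ∃ (e : E3) (x y : (D (levelE e)).V), (D (levelE e)).Adj x y ∧
      u = embedV D a b e x ∧ w = embedV D a b e y := by
  obtain ⟨⟨e, ε⟩, hends | hends⟩ := h <;> rw [Prod.ext_iff] at hends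
  · exact ⟨e, _, _, ⟨ε, .inl rfl⟩, hends.1.symm, hends.2.symm⟩
  · exact ⟨e, _, _, ⟨ε, .inr rfl⟩, hends.2.symm, hends.1.symm⟩

theorem adj_embedV {e : E3} {x y : (D (levelE e)).V} (h : (D (levelE e)).Adj x y) :
    (GammaD D a b).Adj (embedV D a b e x) (embedV D a b e y) := by
  obtain ⟨ε, hε | hε⟩ := h
  · exact ⟨⟨e, ε⟩, .inl (by simp [hε])⟩
  · exact ⟨⟨e, ε⟩, .inr (by simp [hε])⟩

def copyBonds (η : (GammaD D a b).E → Bool) (e : E3) : (D (levelE e)).E → Bool :=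
  fun ε => η ⟨e, ε⟩

noncomputable def copyColors (ξ : (GammaD D a b).V → Bool) (e : E3) :
    (D (levelE e)).V → Bool :=
  fun x => ξ (embedV D a b e x)

variable {η : (GammaD D a b).E → Bool} {ξ : (GammaD D a b).V → Bool}

theorem treeSiteBlack_some_iff {e : E3} :
    treeSiteBlack D a b η ξ (some e) ↔
      (copyBonds η e, copyColors ξ e) ∈ (D (levelE e)).PivEvent (a (levelE e)) (b (levelE e)) :=
  Iff.rfl

theorem openConn_embedV {e : E3} {x y : (D (levelE e)).V}
    (h : (D (levelE e)).OpenConn (copyBonds η e) x y) :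
    (GammaD D a b).OpenConn η (embedV D a b e x) (embedV D a b e y) := by
  refine ReflTransGen.lift (embedV D a b e) ?_ _ _ h
  rintro u w ⟨ε, hη, hε | hε⟩
  · exact ⟨⟨e, ε⟩, hη, .inl (by simp [hε])⟩
  · exact ⟨⟨e, ε⟩, hη, .inr (by simp [hε])⟩

theorem blackConn_embedV {e : E3} {x y : (D (levelE e)).V}
    (h : (D (levelE e)).BlackConn (copyColors ξ e) x y) :
    (GammaD D a b).BlackConn ξ (embedV D a b e x) (embedV D a b e y) :=
  ⟨h.1, h.2.lift (embedV D a b e) fun _ _ huw => ⟨adj_embedV huw.1, huw.2⟩⟩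

variable (D a b) in
noncomputable def retractToCopy (e : E3) : (GammaD D a b).V → (D (levelE e)).V
  | .inl v => if v ∈ subtree e then b (levelE e) else a (levelE e)
  | .inr ⟨e', x⟩ =>
    if h : e' = e then h ▸ x.1 else if some e' ∈ subtree e then b (levelE e) else a (levelE e)

theorem retractToCopy_embedV_self (e : E3) (x : (D (levelE e)).V) :
    retractToCopy D a b e (embedV D a b e x) = x := by
  unfold embedV
  split_ifs with ha hb
  · simp [retractToCopy, parentV_mem_subtree_iff, ha]
  · simp [retractToCopy, some_mem_subtree_self, hb]
  · simp [retractToCopy]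

theorem retractToCopy_embedV_of_ne {e e' : E3} (hne : e' ≠ e) (x : (D (levelE e')).V) :
    retractToCopy D a b e (embedV D a b e' x) =
      if some e' ∈ subtree e then b (levelE e) else a (levelE e) := by
  unfold embedV
  split_ifs <;> simp_all [retractToCopy, parentV_mem_subtree_iff]

theorem embedV_retractToCopy {e : E3} {w : (GammaD D a b).V}
    (ha : retractToCopy D a b e w ≠ a (levelE e))
    (hb : retractToCopy D a b e w ≠ b (levelE e)) :
    embedV D a b e (retractToCopy D a b e w) = w := by
  rcases w with v | ⟨e', x⟩
  · simp only [retractToCopy] at ha hb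
    split_ifs at ha hb <;> contradiction
  · by_cases he : e' = e
    · subst he
      rw [show retractToCopy D a b e' (.inr ⟨e', x⟩) = x.1 by simp [retractToCopy],
        embedV_of_ne x.2.1 x.2.2]
      rfl
    · simp only [retractToCopy, he, dite_false] at ha hb
      split_ifs at ha hb <;> contradiction

theorem retractToCopy_adj {e : E3} {u w : (GammaD D a b).V}
    (h : (GammaD D a b).Adj u w) :
    retractToCopy D a b e u = retractToCopy D a b e w ∨
      (D (levelE e)).Adj (retractToCopy D a b e u) (retractToCopy D a b e w) := by
  obtain ⟨e', x, y, hxy, rfl, rfl⟩ := exists_copy_of_adj h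
  by_cases he : e' = e
  · subst he
    rw [retractToCopy_embedV_self, retractToCopy_embedV_self]
    exact .inr hxy
  · rw [retractToCopy_embedV_of_ne he, retractToCopy_embedV_of_ne he]
    exact .inl rfl

theorem eq_parentV_of_adj {e : E3} {u w : (GammaD D a b).V}
    (h : (GammaD D a b).Adj u w) (hu : retractToCopy D a b e u = a (levelE e))
    (hw : retractToCopy D a b e w ≠ a (levelE e)) : u = .inl (parentV e) := by
  obtain ⟨e', x, y, -, rfl, rfl⟩ := exists_copy_of_adj h
  by_cases he : e' = e
  · subst he
    rw [retractToCopy_embedV_self] at hu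
    rw [hu, embedV_a]
  · rw [retractToCopy_embedV_of_ne he] at hu
    rw [retractToCopy_embedV_of_ne he, hu] at hw
    exact absurd rfl hw

end Gamma

section Coupling

variable {D : ℕ → Multigraph} {a b : ∀ n, (D n).V}
  {η : (GammaD D a b).E → Bool} {ξ : (GammaD D a b).V → Bool}

theorem copyColors_eq_true_of_mem_cluster
    (hξ : ∀ x y : (GammaD D a b).V, (GammaD D a b).OpenConn η x y → ξ x = ξ y) {e : E3}
    (hA : ξ (.inl (parentV e)) = true) :
    ∀ z ∈ (D (levelE e)).cluster (copyBonds η e) (a (levelE e)), copyColors ξ e z = true := by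
  intro z hz
  rw [copyColors, ← hξ _ _ (openConn_embedV hz), embedV_a, hA]

theorem blackConn_copy_of_walk (hab : ∀ n, a n ≠ b n) {e : E3}
    (hA : ξ (.inl (parentV e)) = true) (hB : ξ (.inl (some e)) = true)
    (h : ReflTransGen (fun u w => (GammaD D a b).Adj u w ∧ ξ w = true)
      (.inl (parentV e)) (.inl (some e))) :
    (D (levelE e)).BlackConn (copyColors ξ e) (a (levelE e)) (b (levelE e)) := by
  have hκa : copyColors ξ e (a (levelE e)) = true := by rwa [copyColors, embedV_a]
  have hκb : copyColors ξ e (b (levelE e)) = true := by rwa [copyColors, embedV_b hab]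
  have hκ {w} (hw : ξ w = true) : copyColors ξ e (retractToCopy D a b e w) = true := by
    by_cases ha : retractToCopy D a b e w = a (levelE e)
    · rwa [ha]
    by_cases hb : retractToCopy D a b e w = b (levelE e)
    · rwa [hb]
    rwa [copyColors, embedV_retractToCopy ha hb]
  have hstep (u w) (huw : (GammaD D a b).Adj u w ∧ ξ w = true) :
      ReflTransGen (fun x y => (D (levelE e)).Adj x y ∧ copyColors ξ e y = true)
        (retractToCopy D a b e u) (retractToCopy D a b e w) := by
    rcases retractToCopy_adj (e := e) huw.1 with heq | hadj
    · rw [heq]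
    · exact .single ⟨hadj, hκ huw.2⟩
  rw [← embedV_a, ← embedV_b hab] at h
  refine ⟨hκa, ?_⟩
  simpa only [Function.onFun, retractToCopy_embedV_self] using
    h.lift' (retractToCopy D a b e) hstep

theorem blackConn_root_some_iff (hab : ∀ n, a n ≠ b n)
    (hξ : ∀ x y : (GammaD D a b).V, (GammaD D a b).OpenConn η x y → ξ x = ξ y) (e : E3) :
    (GammaD D a b).BlackConn ξ (.inl none) (.inl (some e)) ↔
      (GammaD D a b).BlackConn ξ (.inl none) (.inl (parentV e)) ∧
        treeSiteBlack D a b η ξ (some e) := by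
  rw [treeSiteBlack_some_iff]
  constructor
  · intro h
    obtain ⟨hρA, hAs⟩ := h.2.split_at_cut (s := {w | retractToCopy D a b e w ≠ a (levelE e)})
      (fun u w huw hu hw => eq_parentV_of_adj huw.1 (not_not.mp hu) hw)
      (by simp [retractToCopy, none_notMem_subtree])
      (by simpa [retractToCopy, some_mem_subtree_self] using (hab _).symm)
    have hA : ξ (.inl (parentV e)) = true := Multigraph.BlackConn.black_right ⟨h.1, hρA⟩
    refine ⟨⟨h.1, hρA⟩, ?_⟩
    exact (Multigraph.mem_pivEvent_iff_blackConn (copyColors_eq_true_of_mem_cluster hξ hA)).2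
      (blackConn_copy_of_walk hab hA h.black_right hAs)
  · rintro ⟨hρA, hX⟩
    have hlocal := (Multigraph.mem_pivEvent_iff_blackConn
      (copyColors_eq_true_of_mem_cluster hξ hρA.black_right)).1 hX
    have hAs := blackConn_embedV (a := a) (b := b) hlocal
    rw [embedV_a, embedV_b hab] at hAs
    exact hρA.trans hAs

theorem treeConn_of_blackConn (hab : ∀ n, a n ≠ b n)
    (hξ : ∀ x y : (GammaD D a b).V, (GammaD D a b).OpenConn η x y → ξ x = ξ y) (e : E3)
    (h : (GammaD D a b).BlackConn ξ (.inl none) (.inl (some e))) :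
    treeSiteBlack D a b η ξ none ∧
      ReflTransGen (fun u w => T3Adj u w ∧ treeSiteBlack D a b η ξ w) none (some e) := by
  obtain ⟨i, l⟩ := e
  induction l using List.reverseRecOn with
  | nil =>
    obtain ⟨⟨hρ, -⟩, hX⟩ := (blackConn_root_some_iff hab hξ _).1 h
    exact ⟨hρ, .single ⟨parentV_nil i ▸ t3Adj_parentV _, hX⟩⟩
  | append_singleton l x ih =>
    obtain ⟨hρA, hX⟩ := (blackConn_root_some_iff hab hξ _).1 h
    rw [parentV_concat] at hρA
    obtain ⟨hρ, hpath⟩ := ih hρA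
    exact ⟨hρ, hpath.tail ⟨parentV_concat i l x ▸ t3Adj_parentV _, hX⟩⟩

theorem blackConn_of_treeConn (hab : ∀ n, a n ≠ b n)
    (hξ : ∀ x y : (GammaD D a b).V, (GammaD D a b).OpenConn η x y → ξ x = ξ y) {v : V3}
    (hρ : treeSiteBlack D a b η ξ none)
    (h : ReflTransGen (fun u w => T3Adj u w ∧ treeSiteBlack D a b η ξ w) none v) :
    (GammaD D a b).BlackConn ξ (.inl none) (.inl v) := by
  induction h with
  | refl => exact ⟨hρ, .refl⟩
  | tail _ hstep ih =>
    obtain ⟨⟨e, ⟨rfl, rfl⟩ | ⟨rfl, rfl⟩⟩, hX⟩ := hstep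
    · exact (blackConn_root_some_iff hab hξ e).2 ⟨ih, hX⟩
    · exact ((blackConn_root_some_iff hab hξ e).1 ih).1

end Coupling

theorem treelike_black_connection_iff_general
    (D : ℕ → Multigraph) (a b : ∀ n, (D n).V) (hab : ∀ n, a n ≠ b n)
    (η : (GammaD D a b).E → Bool) (ξ : (GammaD D a b).V → Bool)
    (hξ : ∀ x y : (GammaD D a b).V, (GammaD D a b).OpenConn η x y → ξ x = ξ y) :
    ∀ e : E3,
      (GammaD D a b).BlackConn ξ (Sum.inl none) (Sum.inl (some e)) ↔
        (treeSiteBlack D a b η ξ none ∧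
          Relation.ReflTransGen
            (fun u w => T3Adj u w ∧ treeSiteBlack D a b η ξ w) none (some e)) := fun e =>
  ⟨treeConn_of_blackConn hab hξ e, fun ⟨hρ, h⟩ => blackConn_of_treeConn hab hξ hρ h⟩

/-- Coupling identity: for every vertex `v ≠ ρ` of `T₃`, the copies of `ρ` and `v` in
`Γ_D` lie in the same black cluster of `ξ` if and only if `ρ` and `v` lie in the same
black cluster of the tree configuration `X`. -/
theorem treelike_black_connection_iff
    (D : ℕ → Multigraph) (a b : ∀ n, (D n).V) (hab : ∀ n, a n ≠ b n)
    (hconn : ∀ n, ∀ x y : (D n).V, Relation.ReflTransGen ((D n).Adj) x y)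
    (η : (GammaD D a b).E → Bool) (ξ : (GammaD D a b).V → Bool)
    (hξ : ∀ x y : (GammaD D a b).V, (GammaD D a b).OpenConn η x y → ξ x = ξ y) :
    ∀ e : E3,
      (GammaD D a b).BlackConn ξ (Sum.inl none) (Sum.inl (some e)) ↔
        (treeSiteBlack D a b η ξ none ∧
          Relation.ReflTransGen
            (fun u w => T3Adj u w ∧ treeSiteBlack D a b η ξ w) none (some e)) :=
  treelike_black_connection_iff_general D a b hab η ξ hξ
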